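/- arXiv:2408.15894 — 2 statements merged into one kernel-verified Lean document; each statement's English description precedes it below -/
import Mathlib

section
/- The partition of the nodes of a finite directed graph induced by the automorphism group (orbit partition) refines the partition induced by covering symmetry (isomorphism of both input and output trees), which in turn refines the partition induced by fibration symmetry (isomorphism of input trees). -/
/-- A finite directed multigraph: a node type, an edge type, and source/target maps. -/
structure FinDigraph where
  V : Type
  E : Type
  [finV : Finite V]
  [finE : Finite E]
  src : E → V
  tgt : E → V

attribute [instance] FinDigraph.finV FinDigraph.finE

namespace FinDigraph

/-- The far endpoint of a (reversed) path ending at `u`: the list `[e_k, …, e_1]`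
represents the directed path `src e_k → ⋯ → tgt e_1 = u`. -/
def farEnd (G : FinDigraph) (u : G.V) : List G.E → G.V
  | [] => u
  | e :: _ => G.src e

/-- `l = [e_k, …, e_1]` is a directed path of `G` ending at `u`. -/
def IsInPath (G : FinDigraph) (u : G.V) : List G.E → Prop
  | [] => True
  | e :: es => IsInPath G u es ∧ G.tgt e = G.farEnd u es

/-- The nodes of the input tree of `u`: all directed paths ending at `u`. -/
def InPath (G : FinDigraph) (u : G.V) : Type := {l : List G.E // G.IsInPath u l}

/-- The root of the input tree of `u` (the empty path). -/
def root (G : FinDigraph) (u : G.V) : G.InPath u := ⟨[], trivial⟩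

/-- The parent of a path in the input tree (drop the farthest edge); the root is its own parent. -/
def parent (G : FinDigraph) (u : G.V) : G.InPath u → G.InPath u
  | ⟨[], h⟩ => ⟨[], h⟩
  | ⟨_ :: es, h⟩ => ⟨es, h.1⟩

/-- Isomorphism of input trees: a bijection of paths preserving root, depth and parent. -/
def InTreeIso (G : FinDigraph) (u : G.V) (H : FinDigraph) (v : H.V) : Prop :=
  ∃ F : G.InPath u ≃ H.InPath v,
    F (G.root u) = H.root v ∧
    (∀ p, ((F p).1).length = (p.1).length) ∧
    (∀ p, F (G.parent u p) = H.parent v (F p))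

/-- The reverse graph (all edges flipped). -/
def rev (G : FinDigraph) : FinDigraph :=
  { V := G.V, E := G.E, src := G.tgt, tgt := G.src }

/-- Isomorphism of output trees = isomorphism of input trees in the reverse graphs. -/
def OutTreeIso (G : FinDigraph) (u : G.V) (H : FinDigraph) (v : H.V) : Prop :=
  InTreeIso (rev G) u (rev H) v

/-- A homomorphism of directed multigraphs. -/
structure Hom (G H : FinDigraph) where
  onV : G.V → H.V
  onE : G.E → H.E
  map_src : ∀ e, H.src (onE e) = onV (G.src e)
  map_tgt : ∀ e, H.tgt (onE e) = onV (G.tgt e)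

/-- Isomorphism of directed multigraphs. -/
def IsIso (G H : FinDigraph) : Prop :=
  ∃ φ : Hom G H, Function.Bijective φ.onV ∧ Function.Bijective φ.onE

/-- Fibration equivalence of nodes: isomorphic input trees. -/
def fibEquiv (G : FinDigraph) (u v : G.V) : Prop := InTreeIso G u G v

/-- Covering equivalence of nodes: isomorphic input trees and isomorphic output trees. -/
def covEquiv (G : FinDigraph) (u v : G.V) : Prop :=
  InTreeIso G u G v ∧ OutTreeIso G u G v

/-- Orbit equivalence: some automorphism maps one node to the other. -/
def orbitEquiv (G : FinDigraph) (u v : G.V) : Prop :=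
  ∃ φ : Hom G G, Function.Bijective φ.onV ∧ Function.Bijective φ.onE ∧ φ.onV u = v

theorem inTreeIso_refl (G : FinDigraph) (u : G.V) : InTreeIso G u G u :=
  ⟨Equiv.refl _, rfl, fun _ => rfl, fun _ => rfl⟩

theorem inTreeIso_symm {G : FinDigraph} {u : G.V} {H : FinDigraph} {v : H.V}
    (h : InTreeIso G u H v) : InTreeIso H v G u := by
  obtain ⟨F, hroot, hlen, hpar⟩ := h
  refine ⟨F.symm, ?_, ?_, ?_⟩
  · rw [← hroot, Equiv.symm_apply_apply]
  · intro p; rw [← hlen (F.symm p), Equiv.apply_symm_apply]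
  · intro p
    apply F.injective
    rw [Equiv.apply_symm_apply, hpar (F.symm p), Equiv.apply_symm_apply]

theorem inTreeIso_trans {G : FinDigraph} {u : G.V} {H : FinDigraph} {v : H.V}
    {K : FinDigraph} {w : K.V}
    (h₁ : InTreeIso G u H v) (h₂ : InTreeIso H v K w) : InTreeIso G u K w := by
  obtain ⟨F, fr, fl, fp⟩ := h₁
  obtain ⟨F', gr, gl, gp⟩ := h₂
  refine ⟨F.trans F', ?_, ?_, ?_⟩
  · simp [Equiv.trans_apply, fr, gr]
  · intro p; simp [Equiv.trans_apply, gl, fl]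
  · intro p; simp [Equiv.trans_apply, fp, gp]

/-- The setoid of fibration equivalence (isomorphism of input trees). -/
def fibSetoid (G : FinDigraph) : Setoid G.V :=
  ⟨fibEquiv G, ⟨fun u => inTreeIso_refl G u, inTreeIso_symm, inTreeIso_trans⟩⟩

/-- The minimal fibration base of `G`: nodes are the fibers (input-tree isomorphism
classes), and the edges from a fiber `C'` into a fiber `C` are the edges of `G` from
nodes of `C'` into the chosen representative of `C`. -/
def base (G : FinDigraph) : FinDigraph where
  V := Quotient (fibSetoid G)
  E := {e : G.E // G.tgt e = (Quotient.mk (fibSetoid G) (G.tgt e)).out}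
  src e := Quotient.mk (fibSetoid G) (G.src e.1)
  tgt e := Quotient.mk (fibSetoid G) (G.tgt e.1)

/-- The fiber of a node, as a node of the minimal base. -/
def fibClass (G : FinDigraph) (u : G.V) : (base G).V := Quotient.mk (fibSetoid G) u

/-- A partition (given as an equivalence relation) is balanced if any two equivalent
nodes receive the same number of edges from each class. -/
def IsBalanced (G : FinDigraph) (r : G.V → G.V → Prop) : Prop :=
  Equivalence r ∧ ∀ u v, r u v → ∀ w : G.V,
    Nat.card {e : G.E // G.tgt e = u ∧ r (G.src e) w} =
    Nat.card {e : G.E // G.tgt e = v ∧ r (G.src e) w}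

/-- The multiset of states of the in-neighbors of `u` (with edge multiplicity). -/
noncomputable def inStates (G : FinDigraph) {S : Type} (x : G.V → S) (u : G.V) :
    Multiset S :=
  letI := Fintype.ofFinite G.E
  letI := Classical.decEq G.V
  (Finset.univ.filter (fun e => G.tgt e = u)).val.map fun e => x (G.src e)

def Hom.rev {G H : FinDigraph} (φ : Hom G H) : Hom G.rev H.rev :=
  ⟨φ.onV, φ.onE, φ.map_tgt, φ.map_src⟩

section HomMap

variable {G H : FinDigraph} (φ : Hom G H)

lemma farEnd_map (u : G.V) (l : List G.E) :
    H.farEnd (φ.onV u) (l.map φ.onE) = φ.onV (G.farEnd u l) := by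
  cases l with
  | nil => rfl
  | cons e es => exact φ.map_src e

lemma isInPath_map_iff (hV : Function.Injective φ.onV) (u : G.V) (l : List G.E) :
    H.IsInPath (φ.onV u) (l.map φ.onE) ↔ G.IsInPath u l := by
  induction l with
  | nil => exact Iff.rfl
  | cons e es ih =>
    change H.IsInPath _ _ ∧ _ ↔ G.IsInPath _ _ ∧ _
    rw [ih, φ.map_tgt, farEnd_map, hV.eq_iff]

/-- The tree isomorphism maps each path into `u` edgewise through `φ.onE`. -/
theorem inTreeIso_of_hom (hV : Function.Injective φ.onV) (hE : Function.Bijective φ.onE)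
    (u : G.V) : InTreeIso G u H (φ.onV u) := by
  refine ⟨(Equiv.listEquivOfEquiv (Equiv.ofBijective _ hE)).subtypeEquiv
      fun l => (isInPath_map_iff φ hV u l).symm, rfl, fun p => List.length_map _, ?_⟩
  rintro ⟨_ | _, _⟩ <;> rfl

theorem outTreeIso_of_hom (hV : Function.Injective φ.onV) (hE : Function.Bijective φ.onE)
    (u : G.V) : OutTreeIso G u H (φ.onV u) :=
  inTreeIso_of_hom φ.rev hV hE u

end HomMap

end FinDigraph

/-- the orbit partition refines the covering partition, which refines the
fibration partition. -/
theorem orbit_refines_cov_refines_fib (G : FinDigraph) (u v : G.V) :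
    (FinDigraph.orbitEquiv G u v → FinDigraph.covEquiv G u v) ∧
    (FinDigraph.covEquiv G u v → FinDigraph.fibEquiv G u v) := by
  refine ⟨?_, And.left⟩
  rintro ⟨φ, hV, hE, rfl⟩
  exact ⟨FinDigraph.inTreeIso_of_hom φ hV.injective hE u,
    FinDigraph.outTreeIso_of_hom φ hV.injective hE u⟩
end

section
/- In a graph neural network whose layer update is h_u^{(k)} = γ(h_u^{(k-1)}, f({{h_w^{(k-1)} : w ∈ N(−,u)}})) with the same functions γ, f at each node, if two nodes u, v of the input graph G are in the same fiber (have isomorphic input trees) and initial features are constant on fibers, then h_u^{(k)} = h_v^{(k)} for all k. -/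
/-!
An isomorphism of the input trees of `u` and `v` matches the children of the roots, i.e. the
in-edges of `u` and of `v`, and restricts to isomorphisms between the subtrees below matched
children, which are the input trees of the sources of the matched edges. Hence in-edges of nodes
in one fiber can be matched so that matched sources again lie in one fiber, and by induction on
the layer the multisets of in-neighbour features of `u` and `v` coincide, hence so do their
updates.
-/

namespace FinDigraph

variable {G H : FinDigraph} {u : G.V} {v : H.V}

theorem farEnd_append (e : G.E) (l : List G.E) :
    G.farEnd u (l ++ [e]) = G.farEnd (G.src e) l := by
  cases l <;> rfl

theorem isInPath_append {e : G.E} (he : G.tgt e = u) (l : List G.E) :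
    G.IsInPath u (l ++ [e]) ↔ G.IsInPath (G.src e) l := by
  induction l with
  | nil => simp [IsInPath, farEnd, he]
  | cons e₀ l ih => simp [IsInPath, ih, farEnd_append]

theorem parent_val (p : G.InPath u) : (G.parent u p).1 = p.1.tail := by
  obtain ⟨l, h⟩ := p
  cases l <;> rfl

@[simp]
theorem parent_root : G.parent u (G.root u) = G.root u := rfl

theorem eq_root_of_length_eq_zero {p : G.InPath u} (hp : p.1.length = 0) : p = G.root u :=
  Subtype.ext (List.eq_nil_of_length_eq_zero hp)

theorem getLast?_parent {p : G.InPath u} (hp : 2 ≤ p.1.length) :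
    (G.parent u p).1.getLast? = p.1.getLast? := by
  rw [parent_val]
  obtain ⟨_ | ⟨a, _ | ⟨b, l⟩⟩, _⟩ := p
  all_goals simp_all

/-- Paths list their edges from the far end, so appending `e` attaches it at the root: this
embeds the input tree of `G.src e` as the subtree below the child `[e]` of the root of `u`. -/
def snoc {e : G.E} (he : G.tgt e = u) (p : G.InPath (G.src e)) : G.InPath u :=
  ⟨p.1 ++ [e], (isInPath_append he p.1).2 p.2⟩

theorem snoc_injective {e : G.E} (he : G.tgt e = u) : Function.Injective (snoc he) :=
  fun _ _ h => Subtype.ext (List.append_cancel_right (congrArg Subtype.val h))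

theorem length_snoc {e : G.E} (he : G.tgt e = u) (p : G.InPath (G.src e)) :
    (snoc he p).1.length = p.1.length + 1 := by
  simp [snoc]

theorem getLast?_snoc {e : G.E} (he : G.tgt e = u) (p : G.InPath (G.src e)) :
    (snoc he p).1.getLast? = some e :=
  List.getLast?_concat ..

theorem parent_snoc {e : G.E} (he : G.tgt e = u) {p : G.InPath (G.src e)} (hp : p.1 ≠ []) :
    G.parent u (snoc he p) = snoc he (G.parent _ p) := by
  apply Subtype.ext
  rw [parent_val]
  simp only [snoc, parent_val]
  exact List.tail_append_of_ne_nil hp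

theorem exists_snoc_eq {e : G.E} (he : G.tgt e = u) {q : G.InPath u}
    (hq : q.1.getLast? = some e) : ∃ p, snoc he p = q := by
  obtain ⟨l, hl⟩ := List.getLast?_eq_some_iff.1 hq
  exact ⟨⟨l, (isInPath_append he l).1 (hl ▸ q.2)⟩, Subtype.ext hl.symm⟩

noncomputable def subtreeEquiv {e : G.E} (he : G.tgt e = u) :
    G.InPath (G.src e) ≃ {q : G.InPath u // q.1.getLast? = some e} :=
  Equiv.ofBijective (fun p => ⟨snoc he p, getLast?_snoc he p⟩)
    ⟨fun _ _ h => snoc_injective he (congrArg Subtype.val h),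
      fun q => (exists_snoc_eq he q.2).imp fun _ hp => Subtype.ext hp⟩

noncomputable def inEdgeEquivChildren (G : FinDigraph) (u : G.V) :
    {e : G.E // G.tgt e = u} ≃ {p : G.InPath u // p.1.length = 1} :=
  Equiv.ofBijective (fun e => ⟨snoc e.2 (G.root _), rfl⟩)
    ⟨fun e₁ e₂ h => Subtype.ext (List.singleton_inj.1 (congrArg (·.1.1) h)), fun p => by
      obtain ⟨a, ha⟩ := List.length_eq_one_iff.1 p.2
      have hpath := p.1.2
      rw [ha] at hpath
      exact ⟨⟨a, hpath.2⟩, Subtype.ext (Subtype.ext ha.symm)⟩⟩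

/-- Root preservation, required in `InTreeIso`, follows from `length_apply` (see `map_root`). -/
structure InTreeEquiv (G : FinDigraph) (u : G.V) (H : FinDigraph) (v : H.V) where
  toEquiv : G.InPath u ≃ H.InPath v
  length_apply : ∀ p, (toEquiv p).1.length = p.1.length
  apply_parent : ∀ p, toEquiv (G.parent u p) = H.parent v (toEquiv p)

namespace InTreeEquiv

instance : CoeFun (InTreeEquiv G u H v) fun _ => G.InPath u → H.InPath v :=
  ⟨fun F => F.toEquiv⟩

variable (F : InTreeEquiv G u H v)

def symm : InTreeEquiv H v G u where
  toEquiv := F.toEquiv.symm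
  length_apply p := by rw [← F.length_apply, Equiv.apply_symm_apply]
  apply_parent p := F.toEquiv.injective <| by
    rw [Equiv.apply_symm_apply, F.apply_parent, Equiv.apply_symm_apply]

@[simp]
theorem symm_apply_apply (p : G.InPath u) : F.symm (F p) = p :=
  F.toEquiv.symm_apply_apply p

theorem map_root : F (G.root u) = H.root v :=
  eq_root_of_length_eq_zero (F.length_apply _)

noncomputable def inEdgeEquiv : {e : G.E // G.tgt e = u} ≃ {e : H.E // H.tgt e = v} :=
  (G.inEdgeEquivChildren u).trans <|
    (F.toEquiv.subtypeEquiv fun p => by rw [F.length_apply]).trans (H.inEdgeEquivChildren v).symm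

theorem apply_snoc_root (e : {e : G.E // G.tgt e = u}) :
    F (snoc e.2 (G.root _)) = snoc (F.inEdgeEquiv e).2 (H.root _) :=
  (congrArg Subtype.val ((H.inEdgeEquivChildren v).apply_symm_apply
    ⟨F (snoc e.2 (G.root _)), by rw [F.length_apply]; rfl⟩)).symm

/-- Climbing to the parent changes neither the last edge of a path of length `≥ 2` nor that
of its image. -/
theorem getLast?_apply_snoc {e : G.E} (he : G.tgt e = u) (p : G.InPath (G.src e)) :
    (F (snoc he p)).1.getLast? = (F (snoc he (G.root _))).1.getLast? := by
  induction hn : p.1.length generalizing p with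
  | zero => rw [eq_root_of_length_eq_zero hn]
  | succ n ih =>
    have hp : p.1 ≠ [] := List.ne_nil_of_length_eq_add_one hn
    have hlen : 2 ≤ (F (snoc he p)).1.length := by rw [F.length_apply, length_snoc, hn]; omega
    rw [← getLast?_parent hlen, ← F.apply_parent, parent_snoc he hp, ih]
    rw [parent_val, List.length_tail, hn, Nat.add_sub_cancel]

variable {e : G.E} {e' : H.E} (he : G.tgt e = u) (he' : H.tgt e' = v)

theorem getLast?_apply_of_getLast? (hee' : F (snoc he (G.root _)) = snoc he' (H.root _))
    {q : G.InPath u} (hq : q.1.getLast? = some e) : (F q).1.getLast? = some e' := by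
  obtain ⟨p, rfl⟩ := exists_snoc_eq he hq
  rw [F.getLast?_apply_snoc, hee', getLast?_snoc]

theorem getLast?_apply_eq_iff (hee' : F (snoc he (G.root _)) = snoc he' (H.root _))
    (q : G.InPath u) : (F q).1.getLast? = some e' ↔ q.1.getLast? = some e := by
  have hee'_symm : F.symm (snoc he' (H.root _)) = snoc he (G.root _) := by
    rw [← hee', symm_apply_apply]
  refine ⟨fun h => ?_, F.getLast?_apply_of_getLast? he he' hee'⟩
  simpa using F.symm.getLast?_apply_of_getLast? he' he hee'_symm h

noncomputable def restrictSubtreeEquiv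
    (hee' : F (snoc he (G.root _)) = snoc he' (H.root _)) :
    G.InPath (G.src e) ≃ H.InPath (H.src e') :=
  (subtreeEquiv he).trans <|
    (F.toEquiv.subtypeEquiv fun q => (F.getLast?_apply_eq_iff he he' hee' q).symm).trans
      (subtreeEquiv he').symm

theorem snoc_restrictSubtreeEquiv (hee' : F (snoc he (G.root _)) = snoc he' (H.root _))
    (p : G.InPath (G.src e)) : snoc he' (F.restrictSubtreeEquiv he he' hee' p) = F (snoc he p) :=
  congrArg Subtype.val ((subtreeEquiv he').apply_symm_apply _)

theorem length_restrictSubtreeEquiv (hee' : F (snoc he (G.root _)) = snoc he' (H.root _))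
    (p : G.InPath (G.src e)) : (F.restrictSubtreeEquiv he he' hee' p).1.length = p.1.length := by
  have := congrArg (·.1.length) (F.snoc_restrictSubtreeEquiv he he' hee' p)
  simp only [length_snoc, F.length_apply] at this
  omega

theorem restrictSubtreeEquiv_parent (hee' : F (snoc he (G.root _)) = snoc he' (H.root _))
    (p : G.InPath (G.src e)) :
    F.restrictSubtreeEquiv he he' hee' (G.parent _ p) =
      H.parent _ (F.restrictSubtreeEquiv he he' hee' p) := by
  set T := F.restrictSubtreeEquiv he he' hee'
  by_cases hp : p.1 = []
  · have hroot : p = G.root _ := Subtype.ext hp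
    have hTroot : T (G.root _) = H.root _ :=
      eq_root_of_length_eq_zero (F.length_restrictSubtreeEquiv he he' hee' _)
    rw [hroot, parent_root, hTroot, parent_root]
  · have hTp : (T p).1 ≠ [] := by
      rw [← List.length_pos_iff, F.length_restrictSubtreeEquiv]; exact List.length_pos_iff.2 hp
    apply snoc_injective he'
    rw [F.snoc_restrictSubtreeEquiv, ← parent_snoc he' hTp, F.snoc_restrictSubtreeEquiv,
      ← F.apply_parent, parent_snoc he hp]

noncomputable def restrictSubtree (hee' : F (snoc he (G.root _)) = snoc he' (H.root _)) :
    InTreeEquiv G (G.src e) H (H.src e') :=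
  ⟨F.restrictSubtreeEquiv he he' hee', F.length_restrictSubtreeEquiv he he' hee',
    F.restrictSubtreeEquiv_parent he he' hee'⟩

end InTreeEquiv

theorem inTreeIso_iff_nonempty : InTreeIso G u H v ↔ Nonempty (InTreeEquiv G u H v) :=
  ⟨fun ⟨F, _, hlen, hpar⟩ => ⟨⟨F, hlen, hpar⟩⟩,
    fun ⟨F⟩ => ⟨F.toEquiv, F.map_root, F.length_apply, F.apply_parent⟩⟩

theorem InTreeIso.exists_inEdgeEquiv (h : InTreeIso G u H v) :
    ∃ Φ : {e : G.E // G.tgt e = u} ≃ {e : H.E // H.tgt e = v},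
      ∀ e, InTreeIso G (G.src e.1) H (H.src (Φ e).1) := by
  obtain ⟨F⟩ := inTreeIso_iff_nonempty.1 h
  exact ⟨F.inEdgeEquiv, fun e =>
    inTreeIso_iff_nonempty.2 ⟨F.restrictSubtree e.2 _ (F.apply_snoc_root e)⟩⟩

theorem inStates_eq_of_inEdgeEquiv {S : Type} {x : G.V → S} {y : H.V → S}
    (Φ : {e : G.E // G.tgt e = u} ≃ {e : H.E // H.tgt e = v})
    (hΦ : ∀ e, x (G.src e.1) = y (H.src (Φ e).1)) : G.inStates x u = H.inStates y v := by
  let _ := Fintype.ofFinite G.E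
  let _ := Fintype.ofFinite H.E
  classical
  simp only [inStates]
  rw [← Finset.univ_val_map_subtype_restrict, ← Finset.univ_val_map_subtype_restrict,
    ← Multiset.map_univ_val_equiv Φ, Multiset.map_map]
  exact Multiset.map_congr rfl fun e _ => hΦ e

def IsInBisimulation (G : FinDigraph) (r : G.V → G.V → Prop) : Prop :=
  ∀ u v, r u v → ∃ Φ : {e : G.E // G.tgt e = u} ≃ {e : G.E // G.tgt e = v},
    ∀ e, r (G.src e.1) (G.src (Φ e).1)

variable (G) in
theorem isInBisimulation_fibEquiv : G.IsInBisimulation G.fibEquiv :=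
  fun _ _ h => InTreeIso.exists_inEdgeEquiv h

theorem IsInBisimulation.gnn_eq {r : G.V → G.V → Prop}
    (hr : G.IsInBisimulation r) {S A : Type} {γ : S → A → S} {f : Multiset S → A}
    {h : ℕ → G.V → S} (hdyn : ∀ k u, h (k + 1) u = γ (h k u) (f (G.inStates (h k) u)))
    (hinit : ∀ u v, r u v → h 0 u = h 0 v) (k : ℕ) : ∀ u v, r u v → h k u = h k v := by
  induction k with
  | zero => exact hinit
  | succ k ih =>
    intro u v huv
    obtain ⟨Φ, hΦ⟩ := hr u v huv
    rw [hdyn, hdyn, ih u v huv, inStates_eq_of_inEdgeEquiv Φ fun e => ih _ _ (hΦ e)]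

end FinDigraph

/-- in a GNN with layer update
`h (k+1) u = γ (h k u) (f (multiset of in-neighbor features))`, nodes in the same fiber
(isomorphic input trees) have synchronized features at every layer, provided the
initial features are constant on fibers. -/
theorem gnn_fiber_synchronization (G : FinDigraph) (S A : Type)
    (γ : S → A → S) (f : Multiset S → A) (h : ℕ → G.V → S)
    (hdyn : ∀ k u, h (k + 1) u = γ (h k u) (f (FinDigraph.inStates G (h k) u)))
    (hinit : ∀ u v, FinDigraph.fibEquiv G u v → h 0 u = h 0 v) :
    ∀ k u v, FinDigraph.fibEquiv G u v → h k u = h k v :=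
  (FinDigraph.isInBisimulation_fibEquiv G).gnn_eq hdyn hinit
end
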